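/- Let n and s be coprime integers with 2 ≤ n < s, g = (n-1)(s-1)/2, and let w_1 < ... < w_g be the gaps of the numerical semigroup generated by n and s. Define λ(n,s)_i = w_{g+1-i} - (g-i) for 1 ≤ i ≤ g. Then λ(n,s) is a partition (i.e. λ(n,s)_1 ≥ λ(n,s)_2 ≥ ... ≥ λ(n,s)_g ≥ 0) and it is self-conjugate: λ(n,s)' = λ(n,s). -/
import Mathlib


/-- A natural number `k` is representable if `k = n*i + s*j` for some naturals `i, j`. -/
def Representable (n s k : ℕ) : Prop := ∃ i j : ℕ, k = n * i + s * j

lemma rep_iff {n s k j : ℕ} (hcop : Nat.Coprime n s) (hj : j < n)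
    (hmod : s * j ≡ k [MOD n]) : Representable n s k ↔ s * j ≤ k := by
  constructor
  · rintro ⟨a, b, rfl⟩
    have h1 : s * b ≡ s * j [MOD n] := by
      calc s * b ≡ n * a + s * b [MOD n] := (Nat.modEq_iff_dvd' (by omega)).mpr ⟨a, by omega⟩
        _ ≡ s * j [MOD n] := hmod.symm
    have h2 : b ≡ j [MOD n] := h1.cancel_left_of_coprime hcop
    have h3 : j = b % n := by
      have hh : b % n = j % n := h2
      rw [Nat.mod_eq_of_lt hj] at hh; omega
    calc s * j = s * (b % n) := by rw [h3]
      _ ≤ s * b := Nat.mul_le_mul_left s (Nat.mod_le _ _)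
      _ ≤ n * a + s * b := by omega
  · intro hle
    obtain ⟨a, ha⟩ := (Nat.modEq_iff_dvd' hle).mp hmod
    exact ⟨a, j, by omega⟩

lemma exists_j {n : ℕ} (s k : ℕ) (hn : 2 ≤ n) (hcop : Nat.Coprime n s) :
    ∃ j, j < n ∧ s * j ≡ k [MOD n] := by
  haveI : NeZero n := ⟨by omega⟩
  have hu : IsUnit (s : ZMod n) := (ZMod.isUnit_iff_coprime s n).mpr hcop.symm
  refine ⟨((s : ZMod n)⁻¹ * k).val, ZMod.val_lt _, ?_⟩
  have : ((s * ((s : ZMod n)⁻¹ * k).val : ℕ) : ZMod n) = ((k : ℕ) : ZMod n) := by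
    push_cast
    rw [ZMod.natCast_rightInverse, ← mul_assoc, ZMod.mul_inv_of_unit _ hu, one_mul]
  exact (ZMod.natCast_eq_natCast_iff _ _ _).mp this

section
variable {n s : ℕ}

lemma ns_big (hn : 2 ≤ n) (hns : n < s) : n + s ≤ n * s := by nlinarith

variable (hn : 2 ≤ n) (hns : n < s) (hcop : Nat.Coprime n s)
include hn hns hcop

lemma not_rep_F : ¬ Representable n s (n * s - n - s) := by
  have hb := ns_big hn hns
  have e : s * (n - 1) = s * n - s := by rw [Nat.mul_sub, mul_one]
  have hsn : s * n = n * s := mul_comm s n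
  have e2 : s * (n - 1) = (n * s - n - s) + n := by omega
  have hmod : s * (n - 1) ≡ n * s - n - s [MOD n] := by
    rw [e2]; exact Nat.add_mod_right _ _
  intro hrep
  have := (rep_iff hcop (by omega) hmod).mp hrep
  omega

lemma rep_of_gt_F {k : ℕ} (hk : n * s - n - s < k) : Representable n s k := by
  have hb := ns_big hn hns
  obtain ⟨j, hj, hmod⟩ := exists_j s k hn hcop
  rw [rep_iff hcop hj hmod]
  by_contra hlt
  push_neg at hlt
  have hdvd : n ∣ s * j - k := (Nat.modEq_iff_dvd' (le_of_lt hlt)).mp hmod.symm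
  obtain ⟨m, hm⟩ := hdvd
  have hsj : s * j ≤ s * (n - 1) := Nat.mul_le_mul_left s (by omega)
  have e : s * (n - 1) = s * n - s := by rw [Nat.mul_sub, mul_one]
  have hsn : s * n = n * s := mul_comm s n
  have hmpos : 1 ≤ m := by
    rcases Nat.eq_zero_or_pos m with h | h
    · rw [h, mul_zero] at hm; omega
    · exact h
  have hnm : n ≤ n * m := Nat.le_mul_of_pos_right n hmpos
  omega

lemma rep_sub {k : ℕ} (hkF : k ≤ n * s - n - s) (hk : ¬ Representable n s k) :
    Representable n s (n * s - n - s - k) := by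
  have hb := ns_big hn hns
  obtain ⟨j, hj, hmod⟩ := exists_j s k hn hcop
  have hlt : k < s * j := by
    by_contra h; push_neg at h; exact hk ((rep_iff hcop hj hmod).mpr h)
  have hdvd : n ∣ s * j - k := (Nat.modEq_iff_dvd' (le_of_lt hlt)).mp hmod.symm
  obtain ⟨m, hm⟩ := hdvd
  have hmpos : 1 ≤ m := by
    rcases Nat.eq_zero_or_pos m with h | h
    · rw [h, mul_zero] at hm; omega
    · exact h
  have hnm : n ≤ n * m := Nat.le_mul_of_pos_right n hmpos
  have hj1 : 1 ≤ j := by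
    rcases Nat.eq_zero_or_pos j with h | h
    · rw [h, mul_zero] at hlt; omega
    · exact h
  refine ⟨m - 1, n - 1 - j, ?_⟩
  have e1 : s * (n - 1 - j) = s * n - s - s * j := by
    rw [Nat.mul_sub, Nat.mul_sub, mul_one]
  have e2 : n * (m - 1) = n * m - n := by rw [Nat.mul_sub, mul_one]
  have hsn : s * n = n * s := mul_comm s n
  have hsjle : s * j ≤ s * n - s := by
    have : s * j ≤ s * (n - 1) := Nat.mul_le_mul_left s (by omega)
    rw [Nat.mul_sub, mul_one] at this; exact this
  omega

lemma not_rep_sub {k : ℕ} (hkF : k ≤ n * s - n - s) (hk : Representable n s k) :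
    ¬ Representable n s (n * s - n - s - k) := by
  intro h
  obtain ⟨a, b, hab⟩ := hk
  obtain ⟨c, d, hcd⟩ := h
  apply not_rep_F hn hns hcop
  exact ⟨a + c, b + d, by rw [Nat.mul_add, Nat.mul_add]; omega⟩

end

theorem partition_lambda_ns_self_conjugate (n s g : ℕ) (hn : 2 ≤ n) (hns : n < s)
    (hcop : Nat.Coprime n s) (hg : 2 * g = (n - 1) * (s - 1))
    (w : Fin g → ℕ) (hw : StrictMono w)
    (hwr : Set.range w = {k : ℕ | ¬ Representable n s k})
    (lam : Fin g → ℤ)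
    (hlam : ∀ i : Fin g, lam i = (w i.rev : ℤ) - ((g - 1 - (i : ℕ) : ℕ) : ℤ)) :
    Antitone lam ∧ (∀ i : Fin g, 0 ≤ lam i) ∧
    (∀ i : Fin g,
      lam i = ((Finset.univ.filter fun j : Fin g => ((i : ℕ) : ℤ) + 1 ≤ lam j).card : ℤ)) := by
  have hb : n + s ≤ n * s := ns_big hn hns
  set F := n * s - n - s with hF
  set W : Finset ℕ := Finset.univ.image w with hWdef
  have hmemW : ∀ x, x ∈ W ↔ ¬ Representable n s x := by
    intro x
    rw [hWdef, Finset.mem_image]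
    constructor
    · rintro ⟨t, -, rfl⟩
      have : w t ∈ Set.range w := ⟨t, rfl⟩
      rwa [hwr] at this
    · intro h
      have : x ∈ Set.range w := by rw [hwr]; exact h
      obtain ⟨t, ht⟩ := this
      exact ⟨t, Finset.mem_univ t, ht⟩
  have hgap : ∀ t : Fin g, ¬ Representable n s (w t) := by
    intro t
    have : w t ∈ Set.range w := ⟨t, rfl⟩
    rwa [hwr] at this
  have hgapF : ∀ t : Fin g, w t ≤ F := by
    intro t
    by_contra h
    push_neg at h
    exact hgap t (rep_of_gt_F hn hns hcop h)
  -- number of gaps below w τ is τ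
  have hcount_gaps : ∀ τ : Fin g, ((Finset.range (w τ)).filter (· ∈ W)).card = τ.val := by
    intro τ
    have himg : (Finset.range (w τ)).filter (· ∈ W) = (Finset.Iio τ).image w := by
      ext x
      simp only [Finset.mem_filter, Finset.mem_range, hWdef, Finset.mem_image,
        Finset.mem_univ, true_and, Finset.mem_Iio]
      constructor
      · rintro ⟨hx, t, rfl⟩
        exact ⟨t, hw.lt_iff_lt.mp hx, rfl⟩
      · rintro ⟨t, ht, rfl⟩
        exact ⟨hw ht, t, rfl⟩
    rw [himg, Finset.card_image_of_injective _ hw.injective, Fin.card_Iio]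
  set A : Fin g → ℕ := fun τ => ((Finset.range (w τ)).filter (· ∉ W)).card with hAdef
  have hA : ∀ τ : Fin g, A τ + τ.val = w τ := by
    intro τ
    have h1 := Finset.card_filter_add_card_filter_not
      (s := Finset.range (w τ)) (p := (· ∈ W))
    rw [hcount_gaps τ, Finset.card_range] at h1
    simp only [hAdef]
    omega
  have hlamA : ∀ i : Fin g, lam i = (A i.rev : ℤ) := by
    intro i
    rw [hlam i]
    have h1 := hA i.rev
    have h2 : (i.rev : ℕ) = g - 1 - (i : ℕ) := by rw [Fin.val_rev]; omega
    omega
  have hAmono : ∀ τ τ' : Fin g, τ ≤ τ' → A τ ≤ A τ' := by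
    intro τ τ' h
    apply Finset.card_le_card
    apply Finset.filter_subset_filter
    exact Finset.range_subset_range.mpr (hw.monotone h)
  -- key symmetry count
  have hK : ∀ m : ℕ, m ≤ F + 1 → ((Finset.range m).filter (· ∉ W)).card
      = (Finset.univ.filter fun t : Fin g => F < w t + m).card := by
    intro m hm
    symm
    apply Finset.card_bij (fun t _ => F - w t)
    · intro t ht
      simp only [Finset.mem_filter, Finset.mem_univ, true_and] at ht
      simp only [Finset.mem_filter, Finset.mem_range]
      refine ⟨by have := hgapF t; omega, ?_⟩
      intro hmem
      exact (hmemW _).mp hmem (rep_sub hn hns hcop (hgapF t) (hgap t))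
    · intro a _ b _ hab
      have ha := hgapF a
      have hb' := hgapF b
      exact hw.injective (by omega)
    · intro x hx
      simp only [Finset.mem_filter, Finset.mem_range] at hx
      obtain ⟨hxm, hxW⟩ := hx
      have hxrep : Representable n s x := by
        by_contra h
        exact hxW ((hmemW x).mpr h)
      have hxF : x ≤ F := by omega
      have : ¬ Representable n s (F - x) := not_rep_sub hn hns hcop hxF hxrep
      obtain ⟨t, -, ht⟩ := Finset.mem_image.mp ((hmemW (F - x)).mpr this)
      refine ⟨t, ?_, ?_⟩
      · simp only [Finset.mem_filter, Finset.mem_univ, true_and]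
        omega
      · omega
  have hAK : ∀ τ : Fin g, A τ = (Finset.univ.filter fun t : Fin g => F < w t + w τ).card := by
    intro τ
    exact hK (w τ) (by have := hgapF τ; omega)
  -- threshold
  have hthresh : ∀ (c : ℕ) (i : Fin g),
      ((i : ℕ) + 1 ≤ (Finset.univ.filter fun t : Fin g => F < w t + c).card) ↔
        F < w i.rev + c := by
    intro c i
    have hrev : (i.rev : ℕ) = g - 1 - (i : ℕ) := by rw [Fin.val_rev]; omega
    have hig : (i : ℕ) < g := i.isLt
    constructor
    · intro h
      by_contra hc
      push_neg at hc
      have hsub : (Finset.univ.filter fun t : Fin g => F < w t + c) ⊆ Finset.Ioi i.rev := by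
        intro t ht
        simp only [Finset.mem_filter, Finset.mem_univ, true_and] at ht
        rw [Finset.mem_Ioi]
        by_contra hle
        push_neg at hle
        have := hw.monotone hle
        omega
      have hcard := Finset.card_le_card hsub
      rw [Fin.card_Ioi] at hcard
      omega
    · intro h
      have hsub : Finset.Ici i.rev ⊆ Finset.univ.filter fun t : Fin g => F < w t + c := by
        intro t ht
        rw [Finset.mem_Ici] at ht
        simp only [Finset.mem_filter, Finset.mem_univ, true_and]
        have := hw.monotone ht
        omega
      have hcard := Finset.card_le_card hsub
      rw [Fin.card_Ici] at hcard
      omega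
  refine ⟨?_, ?_, ?_⟩
  · intro i j hij
    rw [hlamA i, hlamA j]
    exact_mod_cast hAmono _ _ (Fin.rev_le_rev.mpr hij)
  · intro i
    rw [hlamA i]
    exact_mod_cast Nat.zero_le _
  · intro i
    have e1 : (Finset.univ.filter fun j : Fin g => ((i : ℕ) : ℤ) + 1 ≤ lam j)
        = Finset.univ.filter fun j : Fin g => F < w i.rev + w j.rev := by
      apply Finset.filter_congr
      intro j _
      rw [hlamA j]
      have h1 : ((i : ℕ) + 1 ≤ A j.rev) ↔ F < w i.rev + w j.rev := by
        rw [hAK j.rev]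
        exact hthresh (w j.rev) i
      rw [← h1]
      exact_mod_cast Iff.rfl
    have hrevc : (Finset.univ.filter fun j : Fin g => F < w i.rev + w j.rev).card
        = (Finset.univ.filter fun t : Fin g => F < w t + w i.rev).card := by
      apply Finset.card_bij (fun j _ => j.rev)
      · intro a ha
        simp only [Finset.mem_filter, Finset.mem_univ, true_and] at ha ⊢
        omega
      · intro a _ b _ hab
        exact Fin.rev_injective hab
      · intro b hb
        simp only [Finset.mem_filter, Finset.mem_univ, true_and] at hb
        exact ⟨b.rev, by
          simp only [Finset.mem_filter, Finset.mem_univ, true_and, Fin.rev_rev]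
          omega, Fin.rev_rev b⟩
    rw [hlamA i, e1, hrevc, ← hAK i.rev]
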